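/- arXiv:1411.7819 — 2 statements merged into one kernel-verified Lean document; each statement's English description precedes it below -/
import Mathlib

section
/- Let (M, δ) be a finite (or compact) metric space with at least k ≥ 2 points, and let q_1, …, q_k be a farthest-point-insertion sequence with S_i = {q_1, …, q_i} and S_1 = {q_1}. Then R_{S_i} ≤ R_{S_{i−1}} for each i ∈ {2, …, k}, and the gap ratio satisfies GR_{S_i} ≤ 2 for each i ∈ {2, …, k}. -/
open Metric

/-- Minimum gap of a point set `P`: half the least pairwise distance. -/
noncomputable def minGap {E : Type*} [MetricSpace E] (P : Set E) : ℝ :=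
  sInf {d : ℝ | ∃ p ∈ P, ∃ q ∈ P, p ≠ q ∧ d = dist p q} / 2

/-- Maximum gap of `P` over the space `X`: the covering radius of `P` in `X`. -/
noncomputable def maxGap {E : Type*} [MetricSpace E] (X P : Set E) : ℝ :=
  sSup ((fun q => Metric.infDist q P) '' X)

/-- Gap ratio of `P` over the space `X`. -/
noncomputable def gapRatio {E : Type*} [MetricSpace E] (X P : Set E) : ℝ :=
  maxGap X P / minGap P

/-- The first `i` points of the sequence `q`. -/
def fpiPrefix {E : Type*} (q : ℕ → E) (i : ℕ) : Set E := q '' {j | j < i}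

/-- `q` is a farthest-point-insertion sequence of length `k` in the space `X`:
`q 0` and `q 1` realize the diameter of `X`, and each subsequent point is a
point of `X` farthest from the already chosen points. -/
def IsFPIOn {E : Type*} [MetricSpace E] (X : Set E) (k : ℕ) (q : ℕ → E) : Prop :=
  (∀ i < k, q i ∈ X) ∧
  dist (q 0) (q 1) = Metric.diam X ∧
  ∀ i, 2 ≤ i → i < k →
    Metric.infDist (q i) (fpiPrefix q i) = maxGap X (fpiPrefix q i)

/-!
Adding points can only shrink the covering radius, so the maximum gap is antitone along the
prefixes. For the gap ratio, take two chosen points `q a`, `q b` with `a < b`. If `b ≥ 2`,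
then `q b` was inserted as a farthest point from `S_b`, so
`R_{S_i} ≤ R_{S_b} = d(q b, S_b) ≤ d(q b, q a)`; if `b = 1` the pair realizes the diameter,
which bounds every covering radius. Hence `R_{S_i}` is at most every pairwise distance in
`S_i`, i.e. `R_{S_i} ≤ 2 r_{S_i}`.
-/

section MetricSpace

variable {E : Type*} [MetricSpace E] {X P Q : Set E}

theorem bddAbove_infDist_image (hX : Bornology.IsBounded X) (P : Set E) :
    BddAbove ((fun x => infDist x P) '' X) :=
  ((lipschitz_infDist_pt P).isBounded_image hX).bddAbove

theorem infDist_le_maxGap (hX : Bornology.IsBounded X) {x : E} (hx : x ∈ X) :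
    infDist x P ≤ maxGap X P :=
  le_csSup (bddAbove_infDist_image hX P) ⟨x, hx, rfl⟩

theorem maxGap_nonneg : 0 ≤ maxGap X P :=
  Real.sSup_nonneg <| by
    rintro _ ⟨x, -, rfl⟩
    exact infDist_nonneg

theorem maxGap_anti (hX : Bornology.IsBounded X) (hPQ : P ⊆ Q) (hP : P.Nonempty) :
    maxGap X Q ≤ maxGap X P := by
  refine Real.sSup_le ?_ maxGap_nonneg
  rintro _ ⟨x, hx, rfl⟩
  exact (infDist_le_infDist_of_subset hPQ hP).trans (infDist_le_maxGap hX hx)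

theorem maxGap_le_diam (hX : Bornology.IsBounded X) {p : E} (hpP : p ∈ P) (hpX : p ∈ X) :
    maxGap X P ≤ diam X := by
  refine Real.sSup_le ?_ diam_nonneg
  rintro _ ⟨x, hx, rfl⟩
  exact (infDist_le_dist_of_mem hpP).trans (dist_le_diam_of_mem hX hx hpX)

theorem minGap_nonneg : 0 ≤ minGap P := by
  refine div_nonneg (Real.sInf_nonneg ?_) zero_le_two
  rintro _ ⟨p, -, q, -, -, rfl⟩
  exact dist_nonneg

theorem gapRatio_le_two (h : ∀ p ∈ P, ∀ q ∈ P, p ≠ q → maxGap X P ≤ dist p q) :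
    gapRatio X P ≤ 2 := by
  rcases P.subsingleton_or_nontrivial with hP | ⟨p, hp, q, hq, hpq⟩
  · -- no pair of distinct points: `minGap P = sInf ∅ / 2 = 0`, and `gapRatio` divides by zero
    have hpairs : {d : ℝ | ∃ p ∈ P, ∃ q ∈ P, p ≠ q ∧ d = dist p q} = ∅ := by
      refine Set.eq_empty_of_forall_notMem ?_
      rintro _ ⟨p, hp, q, hq, hpq, -⟩
      exact hpq (hP hp hq)
    simp [gapRatio, minGap, hpairs]
  · refine div_le_of_le_mul₀ minGap_nonneg zero_le_two ?_
    rw [minGap, mul_div_cancel₀ _ two_ne_zero]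
    refine le_csInf ⟨_, p, hp, q, hq, hpq, rfl⟩ ?_
    rintro _ ⟨p, hp, q, hq, hpq, rfl⟩
    exact h p hp q hq hpq

end MetricSpace

theorem fpiPrefix_mono {E : Type*} (q : ℕ → E) {i j : ℕ} (hij : i ≤ j) :
    fpiPrefix q i ⊆ fpiPrefix q j :=
  Set.image_mono fun _ hl => lt_of_lt_of_le hl hij

theorem mem_fpiPrefix {E : Type*} (q : ℕ → E) {i j : ℕ} (hji : j < i) : q j ∈ fpiPrefix q i :=
  ⟨j, hji, rfl⟩

section FarthestPointInsertion

variable {E : Type*} [MetricSpace E] {X : Set E} {k : ℕ} {q : ℕ → E}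

theorem maxGap_fpiPrefix_anti (hX : Bornology.IsBounded X) {i j : ℕ} (hi : 1 ≤ i)
    (hij : i ≤ j) : maxGap X (fpiPrefix q j) ≤ maxGap X (fpiPrefix q i) :=
  maxGap_anti hX (fpiPrefix_mono q hij) ⟨q 0, mem_fpiPrefix q hi⟩

theorem IsFPIOn.maxGap_fpiPrefix_le_dist (hq : IsFPIOn X k q) (hX : Bornology.IsBounded X)
    {i a b : ℕ} (hik : i ≤ k) (hab : a < b) (hbi : b < i) :
    maxGap X (fpiPrefix q i) ≤ dist (q a) (q b) := by
  obtain ⟨hmem, hdiam, hfarthest⟩ := hq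
  rcases lt_or_ge b 2 with hb | hb
  · obtain rfl : a = 0 := by omega
    obtain rfl : b = 1 := by omega
    rw [hdiam]
    exact maxGap_le_diam hX (mem_fpiPrefix q (by omega)) (hmem 0 (by omega))
  · calc maxGap X (fpiPrefix q i)
        ≤ maxGap X (fpiPrefix q b) := maxGap_fpiPrefix_anti hX (by omega) hbi.le
      _ = infDist (q b) (fpiPrefix q b) := (hfarthest b hb (by omega)).symm
      _ ≤ dist (q b) (q a) := infDist_le_dist_of_mem (mem_fpiPrefix q hab)
      _ = dist (q a) (q b) := dist_comm _ _

theorem IsFPIOn.gapRatio_fpiPrefix_le_two (hq : IsFPIOn X k q) (hX : Bornology.IsBounded X)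
    {i : ℕ} (hik : i ≤ k) : gapRatio X (fpiPrefix q i) ≤ 2 := by
  refine gapRatio_le_two ?_
  rintro _ ⟨a, ha, rfl⟩ _ ⟨b, hb, rfl⟩ hne
  rcases lt_trichotomy a b with hab | rfl | hba
  · exact hq.maxGap_fpiPrefix_le_dist hX hik hab hb
  · exact absurd rfl hne
  · rw [dist_comm]
    exact hq.maxGap_fpiPrefix_le_dist hX hik hba ha

end FarthestPointInsertion

theorem stmt7_general {M : Type*} [MetricSpace M] [CompactSpace M] (k : ℕ)
    (q : ℕ → M) (hq : IsFPIOn Set.univ k q) :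
    ∀ i, 2 ≤ i → i ≤ k →
      maxGap Set.univ (fpiPrefix q i) ≤ maxGap Set.univ (fpiPrefix q (i-1)) ∧
      gapRatio Set.univ (fpiPrefix q i) ≤ 2 := by
  intro i hi hik
  exact ⟨maxGap_fpiPrefix_anti isCompact_univ.isBounded (by omega) (by omega),
    hq.gapRatio_fpiPrefix_le_two isCompact_univ.isBounded hik⟩

/-- Along a farthest-point-insertion sequence in a compact metric space with at
least `k ≥ 2` points, the maximum gap is non-increasing and the gap ratio of each
prefix `S_i` (for `2 ≤ i ≤ k`) is at most `2`. -/
theorem stmt7 {M : Type*} [MetricSpace M] [CompactSpace M] (k : ℕ) (hk : 2 ≤ k)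
    (hpts : ∃ f : Fin k → M, Function.Injective f)
    (q : ℕ → M) (hq : IsFPIOn Set.univ k q) :
    ∀ i, 2 ≤ i → i ≤ k →
      maxGap Set.univ (fpiPrefix q i) ≤ maxGap Set.univ (fpiPrefix q (i-1)) ∧
      gapRatio Set.univ (fpiPrefix q i) ≤ 2 :=
  stmt7_general k q hq
end

section
/- Let P be a set of n ≥ 2 points in the unit square [0,1]² with minimum gap r = (1/2)·min{‖p − q‖ : p, q ∈ P, p ≠ q}. Let x, y ∈ (0, 1], write R_xy = [0,x] × [0,y] and k = |R_xy ∩ P|, and suppose k ≥ 2 and k/n ≥ xy. Then |xy − k/n| ≤ (x² + y²)/(r²·n) − xy. -/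
open Metric

/-- The unit square in the Euclidean plane. -/
def unitSquare : Set (EuclideanSpace ℝ (Fin 2)) :=
  {x | ∀ i, x i ∈ Set.Icc (0:ℝ) 1}

/-!
Distinct points of `P` are at least `2r` apart, while a half-open grid cell of side `√2·r` has
diameter `2r` and is not attained, so each cell holds at most one point of `P`. The rectangle
`[0,x] × [0,y]` meets at most `(x/(√2 r) + 1)(y/(√2 r) + 1)` cells, and since it contains two
points, `x² + y² ≥ 4r²`, which bounds this count by `(x² + y²)/r²`. Hence
`xy ≤ k/n ≤ (x² + y²)/(r² n)`.
-/

section MinGap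

variable {E : Type*} [MetricSpace E] {P : Set E}

lemma finite_pairwise_dists (hP : P.Finite) :
    {d : ℝ | ∃ p ∈ P, ∃ q ∈ P, p ≠ q ∧ d = dist p q}.Finite :=
  (hP.image2 dist hP).subset fun _ ⟨p, hp, q, hq, _, hd⟩ => ⟨p, hp, q, hq, hd.symm⟩

lemma two_mul_minGap_le_dist (hP : P.Finite) {p q : E} (hp : p ∈ P) (hq : q ∈ P)
    (hpq : p ≠ q) : 2 * minGap P ≤ dist p q := by
  have := csInf_le (finite_pairwise_dists hP).bddBelow ⟨p, hp, q, hq, hpq, rfl⟩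
  rw [minGap]
  linarith

lemma minGap_pos (hP : P.Finite) (hP' : P.Nontrivial) : 0 < minGap P := by
  obtain ⟨p, hp, q, hq, hpq⟩ := hP'
  refine div_pos ?_ two_pos
  rw [(finite_pairwise_dists hP).lt_csInf_iff ⟨_, p, hp, q, hq, hpq, rfl⟩]
  rintro _ ⟨a, -, b, -, hab, rfl⟩
  exact dist_pos.mpr hab

end MinGap

section Grid

variable {ι : Type*} [Fintype ι]

lemma abs_sub_lt_of_floor_div_eq {a b s : ℝ} (hs : 0 < s) (h : ⌊a / s⌋ = ⌊b / s⌋) :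
    |a - b| < s := by
  have := Int.abs_sub_lt_one_of_floor_eq_floor h
  rwa [← sub_div, abs_div, abs_of_pos hs, div_lt_one hs] at this

lemma dist_lt_of_floor_div_eq [Nonempty ι] {s : ℝ} (hs : 0 < s) {p q : EuclideanSpace ℝ ι}
    (h : ∀ i, ⌊p i / s⌋ = ⌊q i / s⌋) : dist p q < √(Fintype.card ι) * s := by
  rw [EuclideanSpace.dist_eq, ← Real.sqrt_sq hs.le, ← Real.sqrt_mul (Nat.cast_nonneg _)]
  refine Real.sqrt_lt_sqrt (by positivity) ?_
  calc ∑ i, dist (p i) (q i) ^ 2 < ∑ _i : ι, s ^ 2 :=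
        Finset.sum_lt_sum_of_nonempty Finset.univ_nonempty fun i _ =>
          pow_lt_pow_left₀ (abs_sub_lt_of_floor_div_eq hs (h i)) (abs_nonneg _) two_ne_zero
    _ = Fintype.card ι * s ^ 2 := by simp

lemma dist_sq_le_sum_sq {a : ι → ℝ} {p q : EuclideanSpace ℝ ι}
    (hp : ∀ i, p i ∈ Set.Icc 0 (a i)) (hq : ∀ i, q i ∈ Set.Icc 0 (a i)) :
    dist p q ^ 2 ≤ ∑ i, a i ^ 2 := by
  rw [EuclideanSpace.dist_eq, Real.sq_sqrt (by positivity)]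
  refine Finset.sum_le_sum fun i _ => pow_le_pow_left₀ dist_nonneg ?_ 2
  exact abs_sub_le_of_nonneg_of_le (hp i).1 (hp i).2 (hq i).1 (hq i).2

theorem ncard_le_prod_of_pairwise_le_dist [Nonempty ι] {S : Set (EuclideanSpace ℝ ι)}
    {a : ι → ℝ} {s : ℝ} (hs : 0 < s) (ha : ∀ i, 0 ≤ a i)
    (hS : ∀ p ∈ S, ∀ i, p i ∈ Set.Icc 0 (a i))
    (hsep : S.Pairwise fun p q => √(Fintype.card ι) * s ≤ dist p q) :
    (S.ncard : ℝ) ≤ ∏ i, (a i / s + 1) := by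
  classical
  let cell : EuclideanSpace ℝ ι → ι → ℤ := fun p i => ⌊p i / s⌋
  let cells : Finset (ι → ℤ) := Fintype.piFinset fun i => Finset.Icc 0 ⌊a i / s⌋
  have hmaps : ∀ p ∈ S, cell p ∈ (cells : Set (ι → ℤ)) := fun p hp => by
    simp only [cells, cell, Finset.mem_coe, Fintype.mem_piFinset, Finset.mem_Icc]
    exact fun i => ⟨Int.floor_nonneg.2 (div_nonneg (hS p hp i).1 hs.le),
      Int.floor_le_floor (div_le_div_of_nonneg_right (hS p hp i).2 hs.le)⟩
  have hinj : Set.InjOn cell S := fun p hp q hq hpq => by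
    by_contra hne
    exact (hsep hp hq hne).not_gt (dist_lt_of_floor_div_eq hs (congrFun hpq))
  have hcard := Set.ncard_le_ncard_of_injOn cell hmaps hinj
  rw [Set.ncard_coe_finset, Fintype.card_piFinset] at hcard
  calc (S.ncard : ℝ) ≤ ∏ i, ((Finset.Icc 0 ⌊a i / s⌋).card : ℝ) := by exact_mod_cast hcard
    _ ≤ ∏ i, (a i / s + 1) := Finset.prod_le_prod (fun _ _ => by positivity) fun i _ => ?_
  have hfloor : (0 : ℤ) ≤ ⌊a i / s⌋ + 1 := by
    have := Int.floor_nonneg.2 (div_nonneg (ha i) hs.le)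
    omega
  rw [Int.card_Icc, sub_zero, ← Int.cast_natCast, Int.toNat_of_nonneg hfloor, Int.cast_add,
    Int.cast_one]
  gcongr
  exact Int.floor_le _

end Grid

lemma div_add_one_mul_div_add_one_le {x y r : ℝ} (hr : 0 < r)
    (h : 4 * r ^ 2 ≤ x ^ 2 + y ^ 2) :
    (x / (√2 * r) + 1) * (y / (√2 * r) + 1) ≤ (x ^ 2 + y ^ 2) / r ^ 2 := by
  set s := √2 * r
  have hs : 0 < s := by positivity
  have hs2 : s ^ 2 = 2 * r ^ 2 := by rw [mul_pow, Real.sq_sqrt zero_le_two]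
  have key : (x + s) * (y + s) * r ^ 2 ≤ (x ^ 2 + y ^ 2) * s ^ 2 := by
    nlinarith [sq_nonneg (x - y), sq_nonneg (x + y - 2 * s)]
  rw [div_add_one hs.ne', div_add_one hs.ne', div_mul_div_comm, ← sq,
    div_le_div_iff₀ (by positivity) (by positivity)]
  linarith

theorem stmt18_general (P : Set (EuclideanSpace ℝ (Fin 2)))
    (n : ℕ) (hn : P.ncard = n) (hn2 : 2 ≤ n)
    (x y : ℝ) (hx : x ∈ Set.Ioc (0:ℝ) 1) (hy : y ∈ Set.Ioc (0:ℝ) 1)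
    (r : ℝ) (hr : r = minGap P)
    (k : ℕ)
    (hk : k = (P ∩ {p | p 0 ∈ Set.Icc 0 x ∧ p 1 ∈ Set.Icc 0 y}).ncard)
    (hk2 : 2 ≤ k) (hkn : x * y ≤ (k:ℝ)/n) :
    |x*y - (k:ℝ)/n| ≤ (x^2 + y^2)/(r^2 * n) - x*y := by
  obtain ⟨hx0, -⟩ := hx
  obtain ⟨hy0, -⟩ := hy
  set S := P ∩ {p | p 0 ∈ Set.Icc 0 x ∧ p 1 ∈ Set.Icc 0 y}
  have hP : P.Finite := Set.finite_of_ncard_pos (by omega)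
  have hbox : ∀ p ∈ S, ∀ i, p i ∈ Set.Icc 0 (![x, y] i) := by
    rintro p ⟨-, hp0, hp1⟩ i
    fin_cases i <;> assumption
  obtain ⟨p, hp, q, hq, hpq⟩ : S.Nontrivial := by
    have : Finite S := hP.subset Set.inter_subset_left
    rw [← Set.one_lt_ncard_iff_nontrivial]
    omega
  have hr0 : 0 < r := hr ▸ minGap_pos hP ⟨p, hp.1, q, hq.1, hpq⟩
  have hsep : S.Pairwise fun p q => √(Fintype.card (Fin 2)) * (√2 * r) ≤ dist p q :=
    fun a ha b hb hab => by
      rw [Fintype.card_fin, Nat.cast_ofNat, ← mul_assoc, Real.mul_self_sqrt zero_le_two, hr]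
      exact two_mul_minGap_le_dist hP ha.1 hb.1 hab
  have h4r : 4 * r ^ 2 ≤ x ^ 2 + y ^ 2 := by
    have h2r := hr ▸ two_mul_minGap_le_dist hP hp.1 hq.1 hpq
    have hdist := dist_sq_le_sum_sq (hbox p hp) (hbox q hq)
    simp only [Fin.sum_univ_two, Matrix.cons_val_zero, Matrix.cons_val_one] at hdist
    nlinarith
  have hkr : (k : ℝ) ≤ (x ^ 2 + y ^ 2) / r ^ 2 := by
    have hcount := ncard_le_prod_of_pairwise_le_dist (by positivity)
      (fun i => by fin_cases i <;> simp [hx0.le, hy0.le]) hbox hsep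
    simp only [Fin.prod_univ_two, Matrix.cons_val_zero, Matrix.cons_val_one] at hcount
    exact hk ▸ hcount.trans (div_add_one_mul_div_add_one_le hr0 h4r)
  have hn0 : (0 : ℝ) < n := by exact_mod_cast (by omega : 0 < n)
  rw [abs_sub_comm, abs_of_nonneg (sub_nonneg.2 hkn), ← div_div]
  linarith [div_le_div_of_nonneg_right hkr hn0.le]

/-- Discrepancy upper bound from the minimum gap: for `n ≥ 2` points in the unit
square with minimum gap `r` and an anchored rectangle `[0,x]×[0,y]` containing
`k ≥ 2` of the points with `k/n ≥ xy`, the local star-discrepancy at `(x,y)` is at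
most `(x² + y²)/(r²·n) − xy`. -/
theorem stmt18 (P : Set (EuclideanSpace ℝ (Fin 2))) (hsub : P ⊆ unitSquare)
    (n : ℕ) (hn : P.ncard = n) (hn2 : 2 ≤ n)
    (x y : ℝ) (hx : x ∈ Set.Ioc (0:ℝ) 1) (hy : y ∈ Set.Ioc (0:ℝ) 1)
    (r : ℝ) (hr : r = minGap P)
    (k : ℕ)
    (hk : k = (P ∩ {p | p 0 ∈ Set.Icc 0 x ∧ p 1 ∈ Set.Icc 0 y}).ncard)
    (hk2 : 2 ≤ k) (hkn : x * y ≤ (k:ℝ)/n) :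
    |x*y - (k:ℝ)/n| ≤ (x^2 + y^2)/(r^2 * n) - x*y :=
  stmt18_general P n hn hn2 x y hx hy r hr k hk hk2 hkn
end
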